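/- For every m ≥ 1 and every c, j ∈ ℕ, the map j ↦ A_{m-1}^{j+1}(c − j + 1) (defined for j ≤ c) is monotonically nondecreasing in j. -/

import Mathlib

def A : ℕ → ℕ → ℕ
  | 0, n => n + 1
  | m+1, n => (A m)^[n+1] 1

def theta (c : ℕ) (w : List ℕ) : ℕ := w.foldr A c

theorem Nat.add_le_iterate_of_lt {f : ℕ → ℕ} (hf : ∀ x, x < f x) (k x : ℕ) :
    x + k ≤ f^[k] x := by
  have hmono : StrictMono fun n => f^[n] x :=
    strictMono_nat_of_lt_succ fun n => by
      simpa only [Function.iterate_succ_apply'] using hf (f^[n] x)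
  simpa [Nat.add_comm] using hmono.add_le_nat k 0

theorem lt_A (m x : ℕ) : x < A m x := by
  cases m with
  | zero => exact Nat.lt_succ_self x
  | succ m =>
    have hiter := Nat.add_le_iterate_of_lt (lt_A m) (x + 1) 1
    show x < (A m)^[x + 1] 1
    omega

theorem monotone_A (m : ℕ) : Monotone (A m) := by
  cases m with
  | zero => exact fun _ _ h => Nat.succ_le_succ h
  | succ m =>
    have hid : id ≤ A m := fun x => (lt_A m x).le
    exact fun a b h => Function.monotone_iterate_of_id_le hid (Nat.succ_le_succ h) 1

theorem Monotone.iterate_succ_sub_add_one_le {f : ℕ → ℕ} (hf : Monotone f)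
    (hlt : ∀ x, x < f x) {c j j' : ℕ} (hjj' : j ≤ j') (hj'c : j' ≤ c) :
    f^[j + 1] (c - j + 1) ≤ f^[j' + 1] (c - j' + 1) := by
  induction j', hjj' using Nat.le_induction with
  | base => rfl
  | succ k _ ih =>
    calc f^[j + 1] (c - j + 1)
        ≤ f^[k + 1] (c - k + 1) := ih (by omega)
      _ ≤ f^[k + 1] (f (c - (k + 1) + 1)) := by
          apply hf.iterate
          have := hlt (c - (k + 1) + 1)
          omega
      _ = f^[k + 1 + 1] (c - (k + 1) + 1) := (Function.iterate_succ_apply _ _ _).symm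

theorem stmt17 : ∀ m : ℕ, 1 ≤ m → ∀ c j j' : ℕ, j ≤ j' → j' ≤ c →
    (A (m - 1))^[j + 1] (c - j + 1) ≤ (A (m - 1))^[j' + 1] (c - j' + 1) := by
  intro m _ c j j' hjj' hj'c
  exact (monotone_A (m - 1)).iterate_succ_sub_add_one_le (lt_A (m - 1)) hjj' hj'c
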